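/- arXiv:2309.14607 — 2 statements merged into one kernel-verified Lean document; each statement's English description precedes it below -/
import Mathlib

section
/- Let 0 < p ≤ 1, let X be a p-Banach space over 𝔽 = ℝ or ℂ, and let 𝒳 be a basis of X that is C_q-quasi-greedy, D_s-superdemocratic, and Γ_t-truncation quasi-greedy. Then for all f ∈ X, all greedy sets A of f, all B ⊂ ℕ with |B| ≤ |A| and A ∩ B = ∅, all signs ε on B, and all a ∈ 𝔽, one has ‖f − P_A(f)‖ ≤ C_q·(1 + 2^p·D_s^p·Γ_t^p)^{1/p}·‖f − a·𝟙_{ε,B}‖. -/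
open scoped BigOperators

noncomputable section

/-- A basis of a `p`-Banach space over `𝕜` (`𝕜 = ℝ` or `ℂ`), bundled with the `p`-norm
`N`, the basis vectors `e`, and the biorthogonal functionals `coord`. -/
structure PBasis (𝕜 : Type*) [RCLike 𝕜] (X : Type*) [AddCommGroup X] [Module 𝕜 X]
    (p : ℝ) : Type _ where
  /-- the `p`-norm of the space -/
  N : X → ℝ
  N_nonneg : ∀ f : X, 0 ≤ N f
  N_eq_zero_iff : ∀ f : X, N f = 0 ↔ f = 0
  N_smul : ∀ (t : 𝕜) (f : X), N (t • f) = ‖t‖ * N f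
  N_padd : ∀ f g : X, N (f + g) ^ p ≤ N f ^ p + N g ^ p
  /-- completeness with respect to the `p`-norm -/
  complete : ∀ u : ℕ → X,
      (∀ ε : ℝ, 0 < ε → ∃ n₀ : ℕ, ∀ m n : ℕ, n₀ ≤ m → n₀ ≤ n → N (u m - u n) < ε) →
      ∃ f : X, ∀ ε : ℝ, 0 < ε → ∃ n₀ : ℕ, ∀ n : ℕ, n₀ ≤ n → N (u n - f) < ε
  /-- the basis vectors -/
  e : ℕ → X
  /-- the biorthogonal functionals -/
  coord : ℕ → X →ₗ[𝕜] 𝕜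
  biorth : ∀ n m : ℕ, coord n (e m) = if n = m then (1 : 𝕜) else 0
  /-- the closed linear span of the basis vectors is the whole space -/
  dense_span : ∀ f : X, ∀ ε : ℝ, 0 < ε →
      ∃ g ∈ Submodule.span 𝕜 (Set.range e), N (f - g) < ε
  e_bdd : ∃ c : ℝ, ∀ n : ℕ, N (e n) ≤ c
  coord_bdd : ∃ c : ℝ, ∀ (n : ℕ) (f : X), ‖coord n f‖ ≤ c * N f

namespace PBasis

variable {𝕜 : Type*} [RCLike 𝕜] {X : Type*} [AddCommGroup X] [Module 𝕜 X] {p : ℝ}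

/-- The projection `P_A f = ∑_{n ∈ A} x_n^*(f) x_n`. -/
def proj (bs : PBasis 𝕜 X p) (A : Finset ℕ) (f : X) : X :=
  ∑ n ∈ A, bs.coord n f • bs.e n

/-- The support of `f`. -/
def supp (bs : PBasis 𝕜 X p) (f : X) : Set ℕ := {n | bs.coord n f ≠ 0}

/-- `A` is a greedy set of `f`: `min_{n ∈ A} |x_n^*(f)| ≥ max_{m ∉ A} |x_m^*(f)|`. -/
def IsGreedySet (bs : PBasis 𝕜 X p) (f : X) (A : Finset ℕ) : Prop :=
  ∀ n ∈ A, ∀ m : ℕ, m ∉ A → ‖bs.coord m f‖ ≤ ‖bs.coord n f‖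

/-- `𝟙_{ε,A} = ∑_{j ∈ A} ε_j x_j`. -/
def indSign (bs : PBasis 𝕜 X p) (ε : ℕ → 𝕜) (A : Finset ℕ) : X :=
  ∑ j ∈ A, ε j • bs.e j

/-- `𝟙_A = ∑_{j ∈ A} x_j`. -/
def ind (bs : PBasis 𝕜 X p) (A : Finset ℕ) : X := ∑ j ∈ A, bs.e j

/-- `ε` is a sign on `A`. -/
def IsSign (ε : ℕ → 𝕜) (A : Finset ℕ) : Prop := ∀ j ∈ A, ‖ε j‖ = 1

/-- `min_{n ∈ A} |x_n^*(f)|`. -/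
def minCoef (bs : PBasis 𝕜 X p) (f : X) (A : Finset ℕ) : ℝ :=
  sInf ((fun n => ‖bs.coord n f‖) '' (A : Set ℕ))

/-- `‖f − P_A(f)‖ ≤ C·σ_m(f)` for every greedy set `A` of cardinality `m`. -/
def IsGreedyWith (bs : PBasis 𝕜 X p) (C : ℝ) : Prop :=
  ∀ (f : X) (A B : Finset ℕ) (a : ℕ → 𝕜), bs.IsGreedySet f A → B.card ≤ A.card →
    bs.N (f - bs.proj A f) ≤ C * bs.N (f - ∑ j ∈ B, a j • bs.e j)

/-- `‖f − P_A(f)‖ ≤ C·ρ_m(f)` for every greedy set `A` of cardinality `m`, where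
`ρ_m(f) = inf {‖f − α 𝟙_{ε,B}‖ : |B| = m, ε sign}` and `α = min_{n ∈ A} |x_n^*(f)|`. -/
def IsRGPCCWith (bs : PBasis 𝕜 X p) (C : ℝ) : Prop :=
  ∀ (f : X) (A B : Finset ℕ) (ε : ℕ → 𝕜), bs.IsGreedySet f A → B.card = A.card →
    IsSign ε B →
    bs.N (f - bs.proj A f) ≤ C * bs.N (f - ((bs.minCoef f A : ℝ) : 𝕜) • bs.indSign ε B)

/-- `‖f − P_A(f)‖ ≤ C·ϱ_m(f)` for every greedy set `A` of cardinality `m`, where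
`ϱ_m(f) = inf {‖f − α 𝟙_B‖ : |B| = m}` and `α = min_{n ∈ A} |x_n^*(f)|`. -/
def IsURGPCCWith (bs : PBasis 𝕜 X p) (C : ℝ) : Prop :=
  ∀ (f : X) (A B : Finset ℕ), bs.IsGreedySet f A → B.card = A.card →
    bs.N (f - bs.proj A f) ≤ C * bs.N (f - ((bs.minCoef f A : ℝ) : 𝕜) • bs.ind B)

/-- `K`-unconditionality. -/
def IsUncondWith (bs : PBasis 𝕜 X p) (K : ℝ) : Prop :=
  ∀ (A : Finset ℕ) (f : X), bs.N (bs.proj A f) ≤ K * bs.N f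

/-- `C`-quasi-greediness. -/
def IsQuasiGreedyWith (bs : PBasis 𝕜 X p) (C : ℝ) : Prop :=
  ∀ (f : X) (A : Finset ℕ), bs.IsGreedySet f A → bs.N (f - bs.proj A f) ≤ C * bs.N f

/-- `C`-almost-greediness. -/
def IsAlmostGreedyWith (bs : PBasis 𝕜 X p) (C : ℝ) : Prop :=
  ∀ (f : X) (A B : Finset ℕ), bs.IsGreedySet f A → B.card ≤ A.card →
    bs.N (f - bs.proj A f) ≤ C * bs.N (f - bs.proj B f)

/-- `D`-democracy. -/
def IsDemocraticWith (bs : PBasis 𝕜 X p) (D : ℝ) : Prop :=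
  ∀ A B : Finset ℕ, A.card ≤ B.card → bs.N (bs.ind A) ≤ D * bs.N (bs.ind B)

/-- `D`-superdemocracy. -/
def IsSuperdemocraticWith (bs : PBasis 𝕜 X p) (D : ℝ) : Prop :=
  ∀ (A B : Finset ℕ) (ε η : ℕ → 𝕜), A.card ≤ B.card → IsSign ε A → IsSign η B →
    bs.N (bs.indSign ε A) ≤ D * bs.N (bs.indSign η B)

/-- `A < B`, i.e. every element of `A` is smaller than every element of `B`. -/
def FinsetBefore (A B : Finset ℕ) : Prop := ∀ a ∈ A, ∀ b ∈ B, a < b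

open scoped Classical in
/-- `sgn z = z/|z|` (with the convention `sgn 0 = 1`). -/
def sgn (z : 𝕜) : 𝕜 := if z = 0 then 1 else z / ((‖z‖ : ℝ) : 𝕜)

end PBasis

namespace PBasis

variable {𝕜 : Type*} [RCLike 𝕜] {X : Type*} [AddCommGroup X] [Module 𝕜 X] {p : ℝ}

lemma norm_sgn' (z : 𝕜) : ‖(sgn z : 𝕜)‖ = 1 := by
  unfold sgn
  split_ifs with h
  · simp
  · rw [norm_div, RCLike.norm_ofReal, abs_norm, div_self (norm_ne_zero_iff.mpr h)]

lemma coord_indSign' (bs : PBasis 𝕜 X p) (ε : ℕ → 𝕜) (B : Finset ℕ) (m : ℕ) :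
    bs.coord m (bs.indSign ε B) = if m ∈ B then ε m else 0 := by
  unfold indSign
  rw [map_sum]
  simp only [map_smul, bs.biorth, smul_eq_mul]
  simp [Finset.sum_ite_eq, eq_comm]

lemma exists_topk (v : ℕ → ℝ) : ∀ (k : ℕ) (S : Finset ℕ), k ≤ S.card →
    ∃ Λ : Finset ℕ, Λ ⊆ S ∧ Λ.card = k ∧ ∀ n ∈ Λ, ∀ m ∈ S, m ∉ Λ → v m ≤ v n := by
  intro k
  induction k with
  | zero => exact fun S _ => ⟨∅, by simp, by simp, by simp⟩
  | succ k ih =>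
    intro S hS
    obtain ⟨Λ, hsub, hcard, hprop⟩ := ih S (le_trans (Nat.le_succ k) hS)
    have hne : (S \ Λ).Nonempty := by
      rw [← Finset.card_pos, Finset.card_sdiff_of_subset hsub]; omega
    obtain ⟨m₀, hm₀, hmax⟩ := Finset.exists_max_image (S \ Λ) v hne
    have hm₀S : m₀ ∈ S := (Finset.mem_sdiff.mp hm₀).1
    have hm₀Λ : m₀ ∉ Λ := (Finset.mem_sdiff.mp hm₀).2
    refine ⟨insert m₀ Λ, ?_, ?_, ?_⟩
    · exact Finset.insert_subset hm₀S hsub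
    · rw [Finset.card_insert_of_notMem hm₀Λ, hcard]
    · intro n hn m hmS hm
      have hmΛ : m ∉ Λ := fun h => hm (Finset.mem_insert_of_mem h)
      rcases Finset.mem_insert.mp hn with rfl | hnΛ
      · exact hmax m (Finset.mem_sdiff.mpr ⟨hmS, hmΛ⟩)
      · exact hprop n hnΛ m hmS hmΛ

lemma topk_min (v : ℕ → ℝ) {S Λ T : Finset ℕ} (hTS : T ⊆ S)
    (hprop : ∀ n ∈ Λ, ∀ m ∈ S, m ∉ Λ → v m ≤ v n) (hcard : Λ.card ≤ T.card)
    {τ : ℝ} (hT : ∀ n ∈ T, τ ≤ v n) : ∀ n ∈ Λ, τ ≤ v n := by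
  intro n hn
  by_contra hlt
  push_neg at hlt
  by_cases hsub : T ⊆ Λ
  · have hTΛ : T = Λ := Finset.eq_of_subset_of_card_le hsub hcard
    exact absurd (hT n (hTΛ ▸ hn)) (not_le.mpr hlt)
  · obtain ⟨m, hmT, hmΛ⟩ := Finset.not_subset.mp hsub
    exact absurd (le_trans (hT m hmT) (hprop n hn m (hTS hmT) hmΛ)) (not_le.mpr hlt)

/-- Key estimate: if `Λ` is a nonempty greedy set of `g` with all coefficients `≥ τ ≥ 0`
and `|B| ≤ |Λ|`, then `τ ‖𝟙_{ε,B}‖ ≤ Ds Γt ‖g‖`. -/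
lemma key_estimate (bs : PBasis 𝕜 X p) {Ds Γt : ℝ} (hDs : 0 < Ds) (hΓt : 0 < Γt)
    (hs : bs.IsSuperdemocraticWith Ds)
    (ht : ∀ (f : X) (A : Finset ℕ), bs.IsGreedySet f A →
      bs.minCoef f A * bs.N (∑ n ∈ A, PBasis.sgn (bs.coord n f) • bs.e n) ≤ Γt * bs.N f)
    (g : X) (Λ B : Finset ℕ) (ε : ℕ → 𝕜) (hsign : IsSign ε B)
    (hΛne : Λ.Nonempty) (hgreedy : bs.IsGreedySet g Λ) (hBΛ : B.card ≤ Λ.card)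
    {τ : ℝ} (hτ0 : 0 ≤ τ) (hτ : ∀ n ∈ Λ, τ ≤ ‖bs.coord n g‖) :
    τ * bs.N (bs.indSign ε B) ≤ Ds * (Γt * bs.N g) := by
  have hmin : τ ≤ bs.minCoef g Λ := by
    apply le_csInf
    · exact (Set.Nonempty.image _ (Finset.coe_nonempty.mpr hΛne))
    · rintro b ⟨n, hn, rfl⟩
      exact hτ n hn
  have htrunc := ht g Λ hgreedy
  have hsgn : bs.N (∑ n ∈ Λ, PBasis.sgn (bs.coord n g) • bs.e n)
      = bs.N (bs.indSign (fun n => PBasis.sgn (bs.coord n g)) Λ) := rfl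
  have hsd : bs.N (bs.indSign ε B) ≤
      Ds * bs.N (bs.indSign (fun n => PBasis.sgn (bs.coord n g)) Λ) :=
    hs B Λ ε _ hBΛ hsign (fun n _ => norm_sgn' _)
  have h1 : τ * bs.N (bs.indSign (fun n => PBasis.sgn (bs.coord n g)) Λ) ≤ Γt * bs.N g := by
    refine le_trans ?_ htrunc
    rw [← hsgn] at *
    exact mul_le_mul_of_nonneg_right hmin (bs.N_nonneg _)
  calc τ * bs.N (bs.indSign ε B)
      ≤ τ * (Ds * bs.N (bs.indSign (fun n => PBasis.sgn (bs.coord n g)) Λ)) :=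
        mul_le_mul_of_nonneg_left hsd hτ0
    _ = Ds * (τ * bs.N (bs.indSign (fun n => PBasis.sgn (bs.coord n g)) Λ)) := by ring
    _ ≤ Ds * (Γt * bs.N g) := mul_le_mul_of_nonneg_left h1 (le_of_lt hDs)

end PBasis

/-- If a basis of a `p`-Banach space is `C_q`-quasi-greedy,
`D_s`-superdemocratic and `Γ_t`-truncation quasi-greedy, then
`‖f − P_A(f)‖ ≤ C_q (1 + 2^p D_s^p Γ_t^p)^{1/p} ‖f − a 𝟙_{ε,B}‖` for all `f`, greedy sets
`A`, sets `B` with `|B| ≤ |A|` and `A ∩ B = ∅`, signs `ε` on `B`, and scalars `a`. -/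
theorem quasi_greedy_superdemocratic_bound {𝕜 : Type*} [RCLike 𝕜] {X : Type*}
    [AddCommGroup X] [Module 𝕜 X] {p : ℝ} (hp : 0 < p) (hp1 : p ≤ 1) (bs : PBasis 𝕜 X p)
    (Cq Ds Γt : ℝ) (hCq : 0 < Cq) (hDs : 0 < Ds) (hΓt : 0 < Γt)
    (hq : bs.IsQuasiGreedyWith Cq) (hs : bs.IsSuperdemocraticWith Ds)
    (ht : ∀ (f : X) (A : Finset ℕ), bs.IsGreedySet f A →
      bs.minCoef f A * bs.N (∑ n ∈ A, PBasis.sgn (bs.coord n f) • bs.e n) ≤ Γt * bs.N f) :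
    ∀ (f : X) (A B : Finset ℕ) (ε : ℕ → 𝕜) (a : 𝕜),
      bs.IsGreedySet f A → B.card ≤ A.card → Disjoint A B → PBasis.IsSign ε B →
      bs.N (f - bs.proj A f) ≤
        Cq * (1 + (2 : ℝ) ^ p * Ds ^ p * Γt ^ p) ^ (1 / p) *
          bs.N (f - a • bs.indSign ε B) := by
  intro f A B ε a hA hBA hdisj hsign
  set g := f - a • bs.indSign ε B with hg
  have hNg : 0 ≤ bs.N g := bs.N_nonneg g
  have hu0 : 0 ≤ bs.N (bs.indSign ε B) := bs.N_nonneg _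
  -- the crucial bound: ‖a‖ ‖𝟙_{ε,B}‖ ≤ 2 Ds Γt ‖g‖
  have halpha : ‖a‖ * bs.N (bs.indSign ε B) ≤ 2 * Ds * Γt * bs.N g := by
    rcases Finset.eq_empty_or_nonempty B with rfl | hBne
    · have : bs.indSign ε (∅ : Finset ℕ) = 0 := by simp [PBasis.indSign]
      rw [this, (bs.N_eq_zero_iff 0).mpr rfl, mul_zero]
      positivity
    · -- A is nonempty
      have hAne : A.Nonempty := Finset.card_pos.mp
        (lt_of_lt_of_le (Finset.card_pos.mpr hBne) hBA)
      set t := bs.minCoef f A with htdef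
      have himg : ((fun n => ‖bs.coord n f‖) '' (A : Set ℕ)).Nonempty :=
        Set.Nonempty.image _ (Finset.coe_nonempty.mpr hAne)
      have hbdd : BddBelow ((fun n => ‖bs.coord n f‖) '' (A : Set ℕ)) :=
        (A.finite_toSet.image _).bddBelow
      have ht_le : ∀ n ∈ A, t ≤ ‖bs.coord n f‖ := by
        intro n hn
        exact csInf_le hbdd ⟨n, hn, rfl⟩
      have ht0 : 0 ≤ t := by
        apply Real.sInf_nonneg
        rintro x ⟨n, _, rfl⟩
        exact norm_nonneg _
      have hout : ∀ m, m ∉ A → ‖bs.coord m f‖ ≤ t := by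
        intro m hm
        apply le_csInf himg
        rintro b ⟨n, hn, rfl⟩
        exact hA n hn m hm
      -- coordinates of g
      have hcoordg : ∀ m, bs.coord m g = bs.coord m f - a * (if m ∈ B then ε m else 0) := by
        intro m
        rw [hg, map_sub, map_smul, bs.coord_indSign', smul_eq_mul]
      have hgA : ∀ n ∈ A, bs.coord n g = bs.coord n f := by
        intro n hn
        have : n ∉ B := Finset.disjoint_left.mp hdisj hn
        rw [hcoordg, if_neg this, mul_zero, sub_zero]
      have hgout : ∀ m, m ∉ A → m ∉ B → bs.coord m g = bs.coord m f := by
        intro m _ hm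
        rw [hcoordg, if_neg hm, mul_zero, sub_zero]
      have hgB : ∀ m ∈ B, ‖a‖ - t ≤ ‖bs.coord m g‖ := by
        intro m hm
        rw [hcoordg, if_pos hm]
        have h1 : ‖a * ε m‖ - ‖bs.coord m f‖ ≤ ‖bs.coord m f - a * ε m‖ := by
          calc ‖a * ε m‖ - ‖bs.coord m f‖ ≤ ‖a * ε m - bs.coord m f‖ := norm_sub_norm_le _ _
            _ = ‖bs.coord m f - a * ε m‖ := norm_sub_rev _ _
        have h2 : ‖a * ε m‖ = ‖a‖ := by rw [norm_mul, hsign m hm, mul_one]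
        have h3 : ‖bs.coord m f‖ ≤ t := hout m (Finset.disjoint_right.mp hdisj hm)
        linarith
      have hAval : ∀ n ∈ A, t ≤ ‖bs.coord n g‖ := by
        intro n hn; rw [hgA n hn]; exact ht_le n hn
      -- top-k greedy sets of g inside A ∪ B
      have hASub : A ⊆ A ∪ B := Finset.subset_union_left
      have hBSub : B ⊆ A ∪ B := Finset.subset_union_right
      have mk_greedy : ∀ k : ℕ, k ≤ A.card → ∃ Λ : Finset ℕ, Λ.Nonempty → True := fun _ _ => ⟨∅, fun _ => trivial⟩
      -- generic construction
      have build : ∀ k : ℕ, 0 < k → k ≤ A.card →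
          ∃ Λ : Finset ℕ, Λ.Nonempty ∧ Λ.card = k ∧ bs.IsGreedySet g Λ ∧
            (∀ n ∈ Λ, t ≤ ‖bs.coord n g‖) ∧
            (∀ m ∈ A ∪ B, m ∉ Λ → ‖bs.coord m g‖ ≤ sInf ((fun n => ‖bs.coord n g‖) '' Λ) ∨ True) ∧
            (∀ T : Finset ℕ, T ⊆ A ∪ B → k ≤ T.card → ∀ τ : ℝ,
              (∀ n ∈ T, τ ≤ ‖bs.coord n g‖) → ∀ n ∈ Λ, τ ≤ ‖bs.coord n g‖) := by
        intro k hk0 hkA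
        have hkS : k ≤ (A ∪ B).card := le_trans hkA (Finset.card_le_card hASub)
        obtain ⟨Λ, hΛS, hΛcard, hΛprop⟩ :=
          PBasis.exists_topk (fun n => ‖bs.coord n g‖) k (A ∪ B) hkS
        have htmin : ∀ n ∈ Λ, t ≤ ‖bs.coord n g‖ :=
          PBasis.topk_min _ hASub hΛprop (hΛcard ▸ hkA) hAval
        refine ⟨Λ, Finset.card_pos.mp (hΛcard ▸ hk0), hΛcard, ?_, htmin, fun _ _ _ => Or.inr trivial, ?_⟩
        · intro n hn m hm
          by_cases hmS : m ∈ A ∪ B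
          · exact hΛprop n hn m hmS hm
          · have hmA : m ∉ A := fun h => hmS (hASub h)
            have hmB : m ∉ B := fun h => hmS (hBSub h)
            rw [hgout m hmA hmB]
            exact le_trans (hout m hmA) (htmin n hn)
        · intro T hTS hkT τ hT
          exact PBasis.topk_min _ hTS hΛprop (hΛcard ▸ hkT) hT
      -- bound t ‖𝟙_{ε,B}‖
      have hB0 : 0 < B.card := Finset.card_pos.mpr hBne
      obtain ⟨Λ₁, hΛ₁ne, hΛ₁card, hΛ₁greedy, hΛ₁t, _, _⟩ :=
        build A.card (lt_of_lt_of_le hB0 hBA) le_rfl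
      have hbound_t : t * bs.N (bs.indSign ε B) ≤ Ds * (Γt * bs.N g) :=
        bs.key_estimate hDs hΓt hs ht g Λ₁ B ε hsign hΛ₁ne hΛ₁greedy
          (hΛ₁card ▸ hBA) ht0 hΛ₁t
      by_cases hat : ‖a‖ ≤ t
      · have : ‖a‖ * bs.N (bs.indSign ε B) ≤ Ds * (Γt * bs.N g) :=
          le_trans (mul_le_mul_of_nonneg_right hat hu0) hbound_t
        nlinarith [mul_nonneg (mul_nonneg (le_of_lt hDs) (le_of_lt hΓt)) hNg]
      · push_neg at hat
        obtain ⟨Λ₂, hΛ₂ne, hΛ₂card, hΛ₂greedy, hΛ₂t, _, hΛ₂min⟩ :=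
          build B.card hB0 hBA
        have hΛ₂a : ∀ n ∈ Λ₂, ‖a‖ - t ≤ ‖bs.coord n g‖ :=
          hΛ₂min B hBSub le_rfl (‖a‖ - t) hgB
        have hbound_a : (‖a‖ - t) * bs.N (bs.indSign ε B) ≤ Ds * (Γt * bs.N g) :=
          bs.key_estimate hDs hΓt hs ht g Λ₂ B ε hsign hΛ₂ne hΛ₂greedy
            (hΛ₂card ▸ le_rfl) (by linarith) hΛ₂a
        nlinarith
  -- step: ‖f‖^p ≤ (1 + 2^p Ds^p Γt^p) ‖g‖^p
  have hfp : bs.N f ^ p ≤ (1 + (2:ℝ) ^ p * Ds ^ p * Γt ^ p) * bs.N g ^ p := by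
    have hfeq : f = g + a • bs.indSign ε B := by rw [hg]; abel
    have hpadd : bs.N f ^ p ≤ bs.N g ^ p + bs.N (a • bs.indSign ε B) ^ p := by
      conv_lhs => rw [hfeq]
      exact bs.N_padd g _
    have hsmul : bs.N (a • bs.indSign ε B) = ‖a‖ * bs.N (bs.indSign ε B) := bs.N_smul a _
    have h2 : bs.N (a • bs.indSign ε B) ^ p ≤ (2 * Ds * Γt * bs.N g) ^ p := by
      apply Real.rpow_le_rpow (by rw [hsmul]; positivity) (hsmul ▸ halpha) (le_of_lt hp)
    have h3 : (2 * Ds * Γt * bs.N g) ^ p = (2:ℝ) ^ p * Ds ^ p * Γt ^ p * bs.N g ^ p := by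
      rw [Real.mul_rpow (by positivity) hNg, Real.mul_rpow (by positivity) (le_of_lt hΓt),
        Real.mul_rpow (by norm_num) (le_of_lt hDs)]
    nlinarith [Real.rpow_nonneg hNg p]
  -- conclude
  have hquasi : bs.N (f - bs.proj A f) ≤ Cq * bs.N f := hq f A hA
  have hNf : 0 ≤ bs.N f := bs.N_nonneg f
  have hfinal : bs.N f ≤ (1 + (2:ℝ) ^ p * Ds ^ p * Γt ^ p) ^ (1 / p) * bs.N g := by
    have hK : (0:ℝ) ≤ 1 + (2:ℝ) ^ p * Ds ^ p * Γt ^ p := by positivity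
    have step : (bs.N f ^ p) ^ (1 / p) ≤
        ((1 + (2:ℝ) ^ p * Ds ^ p * Γt ^ p) * bs.N g ^ p) ^ (1 / p) :=
      Real.rpow_le_rpow (Real.rpow_nonneg hNf p) hfp (by positivity)
    have hl : (bs.N f ^ p) ^ (1 / p) = bs.N f := by
      rw [← Real.rpow_mul hNf, mul_one_div, div_self (ne_of_gt hp), Real.rpow_one]
    have hr : ((1 + (2:ℝ) ^ p * Ds ^ p * Γt ^ p) * bs.N g ^ p) ^ (1 / p) =
        (1 + (2:ℝ) ^ p * Ds ^ p * Γt ^ p) ^ (1 / p) * bs.N g := by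
      rw [Real.mul_rpow hK (Real.rpow_nonneg hNg p), ← Real.rpow_mul hNg,
        mul_one_div, div_self (ne_of_gt hp), Real.rpow_one]
    rw [hl, hr] at step
    exact step
  calc bs.N (f - bs.proj A f) ≤ Cq * bs.N f := hquasi
    _ ≤ Cq * ((1 + (2:ℝ) ^ p * Ds ^ p * Γt ^ p) ^ (1 / p) * bs.N g) :=
        mul_le_mul_of_nonneg_left hfinal (le_of_lt hCq)
    _ = Cq * (1 + (2:ℝ) ^ p * Ds ^ p * Γt ^ p) ^ (1 / p) * bs.N g := by ring
end
end

section
/- Let 0 < p ≤ 1, let X be a p-Banach space over 𝔽 = ℝ or ℂ, and let 𝒳 be a basis of X. Suppose there is C > 0 such that ‖f − P_A(f)‖ ≤ C·‖f − (min_{n∈A}|x_n^*(f)|)·𝟙_B‖ for all f ∈ X, all greedy sets A of f, and all B ⊂ ℕ with |B| = |A| and either A < B or B < A. Then 𝒳 is quasi-greedy with quasi-greedy constant C_q ≤ (C^p + 2^{1−p}·B_p^p·C^{3p})^{1/p}, where B_p = 2^{1/p}(2^p − 1)^{−1/p} if 𝔽 = ℝ and B_p = 4^{1/p}(2^p − 1)^{−1/p}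 if 𝔽 = ℂ. -/
open scoped BigOperators

noncomputable section

namespace PBasisAux

open PBasis Finset

variable {𝕜 : Type*} [RCLike 𝕜] {X : Type*} [AddCommGroup X] [Module 𝕜 X] {p : ℝ}

lemma N_zero (bs : PBasis 𝕜 X p) : bs.N 0 = 0 := (bs.N_eq_zero_iff 0).2 rfl

lemma N_neg (bs : PBasis 𝕜 X p) (f : X) : bs.N (-f) = bs.N f := by
  have h := bs.N_smul (-1 : 𝕜) f
  simpa using h

lemma N_psub (bs : PBasis 𝕜 X p) (f g : X) :
    bs.N (f - g) ^ p ≤ bs.N f ^ p + bs.N g ^ p := by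
  have h := bs.N_padd f (-g)
  rw [← sub_eq_add_neg] at h
  simpa [N_neg] using h

lemma N_sum_pow (hp : 0 < p) (bs : PBasis 𝕜 X p) {ι : Type*} [DecidableEq ι]
    (s : Finset ι) (v : ι → X) :
    bs.N (∑ i ∈ s, v i) ^ p ≤ ∑ i ∈ s, bs.N (v i) ^ p := by
  induction s using Finset.cons_induction with
  | empty => simp [N_zero, Real.zero_rpow hp.ne']
  | cons a s ha ih =>
      rw [Finset.sum_cons, Finset.sum_cons]
      calc bs.N (v a + ∑ i ∈ s, v i) ^ p ≤ bs.N (v a) ^ p + bs.N (∑ i ∈ s, v i) ^ p :=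
            bs.N_padd _ _
        _ ≤ _ := by linarith

lemma coord_sum_smul (bs : PBasis 𝕜 X p) (n : ℕ) (s : Finset ℕ) (c : ℕ → 𝕜) :
    bs.coord n (∑ j ∈ s, c j • bs.e j) = if n ∈ s then c n else 0 := by
  classical
  rw [map_sum]
  simp only [map_smul, bs.biorth, smul_eq_mul, mul_ite, mul_one, mul_zero]
  simp [Finset.sum_ite_eq]

lemma coord_proj (bs : PBasis 𝕜 X p) (n : ℕ) (B : Finset ℕ) (f : X) :
    bs.coord n (bs.proj B f) = if n ∈ B then bs.coord n f else 0 :=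
  coord_sum_smul bs n B _

lemma coord_ind (bs : PBasis 𝕜 X p) (n : ℕ) (B : Finset ℕ) :
    bs.coord n (bs.ind B) = if n ∈ B then 1 else 0 := by
  classical
  have : bs.ind B = ∑ j ∈ B, (1 : 𝕜) • bs.e j := by simp [PBasis.ind]
  rw [this, coord_sum_smul]

lemma proj_congr (bs : PBasis 𝕜 X p) {f g : X} {A : Finset ℕ}
    (h : ∀ n ∈ A, bs.coord n f = bs.coord n g) : bs.proj A f = bs.proj A g := by
  unfold PBasis.proj
  exact Finset.sum_congr rfl fun n hn => by rw [h n hn]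

lemma minCoef_le (bs : PBasis 𝕜 X p) {f : X} {A : Finset ℕ} {n : ℕ} (hn : n ∈ A) :
    bs.minCoef f A ≤ ‖bs.coord n f‖ :=
  csInf_le (Set.Finite.bddBelow (A.finite_toSet.image _)) ⟨n, hn, rfl⟩

lemma le_minCoef (bs : PBasis 𝕜 X p) {f : X} {A : Finset ℕ} {b : ℝ} (hA : A.Nonempty)
    (hb : ∀ n ∈ A, b ≤ ‖bs.coord n f‖) : b ≤ bs.minCoef f A := by
  apply le_csInf ((hA.to_set).image _)
  rintro y ⟨n, hn, rfl⟩
  exact hb n hn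

lemma minCoef_congr (bs : PBasis 𝕜 X p) {f g : X} {A : Finset ℕ}
    (h : ∀ n ∈ A, bs.coord n f = bs.coord n g) : bs.minCoef f A = bs.minCoef g A := by
  unfold PBasis.minCoef
  congr 1
  apply Set.image_congr
  intro a ha
  rw [h a ha]

lemma minCoef_empty (bs : PBasis 𝕜 X p) (f : X) : bs.minCoef f (∅ : Finset ℕ) = 0 := by
  simp [PBasis.minCoef, Real.sInf_empty]

lemma coord_small (bs : PBasis 𝕜 X p) (f : X) (θ : ℝ) (hθ : 0 < θ) :
    ∃ M : ℕ, ∀ n : ℕ, M ≤ n → ‖bs.coord n f‖ ≤ θ := by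
  classical
  obtain ⟨cc, hcc⟩ := bs.coord_bdd
  set c' : ℝ := max cc 0 with hc'def
  have hc'0 : (0:ℝ) ≤ c' := le_max_right _ _
  have hcc' : ∀ (n : ℕ) (g : X), ‖bs.coord n g‖ ≤ c' * bs.N g := fun n g =>
    le_trans (hcc n g) (mul_le_mul_of_nonneg_right (le_max_left _ _) (bs.N_nonneg g))
  obtain ⟨g, hgspan, hgN⟩ := bs.dense_span f (θ / (c' + 1)) (by positivity)
  rw [Finsupp.mem_span_range_iff_exists_finsupp] at hgspan
  obtain ⟨co, hco⟩ := hgspan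
  refine ⟨co.support.sup id + 1, fun n hn => ?_⟩
  have hng : bs.coord n g = 0 := by
    rw [← hco, Finsupp.sum, map_sum]
    apply Finset.sum_eq_zero
    intro i hi
    rw [map_smul, bs.biorth]
    have hne : n ≠ i := by
      have := Finset.le_sup (f := id) hi
      simp only [id] at this
      omega
    simp [hne]
  have heq : bs.coord n f = bs.coord n (f - g) := by rw [map_sub, hng, sub_zero]
  rw [heq]
  calc ‖bs.coord n (f - g)‖ ≤ c' * bs.N (f - g) := hcc' _ _
    _ ≤ c' * (θ / (c' + 1)) := mul_le_mul_of_nonneg_left hgN.le hc'0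
    _ ≤ θ := by
        have h1 : c' * (θ / (c' + 1)) = θ * (c' / (c' + 1)) := by ring
        have h2 : c' / (c' + 1) ≤ 1 := by
          rw [div_le_one (by positivity)]; linarith
        nlinarith

lemma proj_block_small (hp : 0 < p) (bs : PBasis 𝕜 X p) (f : X) (m : ℕ) (ε : ℝ) (hε : 0 < ε) :
    ∃ M : ℕ, ∀ B : Finset ℕ, (∀ b ∈ B, M ≤ b) → B.card ≤ m →
      bs.N (bs.proj B f) ^ p ≤ ε := by
  classical
  obtain ⟨ce, hce⟩ := bs.e_bdd
  set c' : ℝ := max ce 0 with hc'def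
  have hc'0 : (0:ℝ) ≤ c' := le_max_right _ _
  set θ : ℝ := (ε / (m + 1)) ^ (1/p) / (c' + 1) with hθdef
  have hθ : 0 < θ := by positivity
  obtain ⟨M, hM⟩ := coord_small bs f θ hθ
  refine ⟨M, fun B hB hBcard => ?_⟩
  have key : ∀ n ∈ B, bs.N (bs.coord n f • bs.e n) ^ p ≤ ε / (m + 1) := by
    intro n hn
    rw [bs.N_smul]
    have h1 : ‖bs.coord n f‖ * bs.N (bs.e n) ≤ θ * c' :=
      mul_le_mul (hM n (hB n hn)) (le_trans (hce n) (le_max_left _ _)) (bs.N_nonneg _) hθ.le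
    have h2 : θ * c' ≤ (ε / (m + 1)) ^ (1/p) := by
      have hr : (0:ℝ) ≤ (ε / (m + 1)) ^ (1/p) := by positivity
      have h3 : θ * c' = (ε / (m + 1)) ^ (1/p) * (c' / (c' + 1)) := by
        rw [hθdef]; ring
      have h4 : c' / (c' + 1) ≤ 1 := by rw [div_le_one (by positivity)]; linarith
      nlinarith
    calc (‖bs.coord n f‖ * bs.N (bs.e n)) ^ p ≤ ((ε / (m + 1)) ^ (1/p)) ^ p :=
          Real.rpow_le_rpow (mul_nonneg (norm_nonneg _) (bs.N_nonneg _)) (h1.trans h2) hp.le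
      _ = ε / (m + 1) := by
          rw [← Real.rpow_mul (by positivity), one_div_mul_cancel hp.ne', Real.rpow_one]
  have hsum : bs.N (bs.proj B f) ^ p ≤ ∑ n ∈ B, bs.N (bs.coord n f • bs.e n) ^ p := by
    have := N_sum_pow hp bs B (fun n => bs.coord n f • bs.e n)
    simpa [PBasis.proj] using this
  calc bs.N (bs.proj B f) ^ p ≤ ∑ n ∈ B, bs.N (bs.coord n f • bs.e n) ^ p := hsum
    _ ≤ ∑ _n ∈ B, ε / (m + 1) := Finset.sum_le_sum key
    _ = B.card * (ε / (m + 1)) := by rw [Finset.sum_const, nsmul_eq_mul]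
    _ ≤ ε := by
        have h5 : (B.card : ℝ) ≤ m := by exact_mod_cast hBcard
        have h6 : (0:ℝ) ≤ ε / (m+1) := by positivity
        have h7 : (m:ℝ) * (ε / (m+1)) ≤ ε := by
          have h8 : (m:ℝ) * (ε / (m+1)) = m * ε / (m+1) := by ring
          rw [h8, div_le_iff₀ (by positivity : (0:ℝ) < (m:ℝ)+1)]
          nlinarith
        nlinarith

def block (n₀ m : ℕ) : Finset ℕ := (Finset.range m).image (n₀ + ·)

lemma block_card (n₀ m : ℕ) : (block n₀ m).card = m := by
  rw [block, Finset.card_image_of_injective _ (add_right_injective n₀), Finset.card_range]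

lemma mem_block {n n₀ m : ℕ} : n ∈ block n₀ m ↔ n₀ ≤ n ∧ n < n₀ + m := by
  simp only [block, Finset.mem_image, Finset.mem_range]
  constructor
  · rintro ⟨i, hi, rfl⟩; omega
  · intro hh; exact ⟨n - n₀, by omega, by omega⟩

end PBasisAux

open PBasisAux in
set_option maxHeartbeats 2000000 in
open scoped Classical in
/-- If the basis satisfies the condition (v) of Theorem 1.7 with constant `C`,
then it is quasi-greedy with quasi-greedy constant
`C_q ≤ (C^p + 2^{1−p} B_p^p C^{3p})^{1/p}`, where `B_p = 2^{1/p}(2^p−1)^{−1/p}` if `𝕜 = ℝ`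
and `B_p = 4^{1/p}(2^p−1)^{−1/p}` if `𝕜 = ℂ`. -/
theorem end2_implies_quasi_greedy {𝕜 : Type*} [RCLike 𝕜] {X : Type*} [AddCommGroup X]
    [Module 𝕜 X] {p : ℝ} (hp : 0 < p) (hp1 : p ≤ 1) (bs : PBasis 𝕜 X p) (C : ℝ) (hC : 0 < C)
    (h : ∀ (f : X) (A B : Finset ℕ), bs.IsGreedySet f A → B.card = A.card →
      (PBasis.FinsetBefore A B ∨ PBasis.FinsetBefore B A) →
      bs.N (f - bs.proj A f) ≤ C * bs.N (f - ((bs.minCoef f A : ℝ) : 𝕜) • bs.ind B)) :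
    bs.IsQuasiGreedyWith
      ((C ^ p + (2 : ℝ) ^ (1 - p) *
        (if (RCLike.I : 𝕜) = 0 then (2 : ℝ) ^ (1 / p) * ((2 : ℝ) ^ p - 1) ^ (-(1 / p))
          else (4 : ℝ) ^ (1 / p) * ((2 : ℝ) ^ p - 1) ^ (-(1 / p))) ^ p *
        C ^ (3 * p)) ^ (1 / p)) := by
  classical
  intro f A hGreedy
  set BP : ℝ := (if (RCLike.I : 𝕜) = 0 then (2 : ℝ) ^ (1 / p) * ((2 : ℝ) ^ p - 1) ^ (-(1 / p))
      else (4 : ℝ) ^ (1 / p) * ((2 : ℝ) ^ p - 1) ^ (-(1 / p))) with hBPdef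
  -- basic exponent facts
  have h2p1 : (0:ℝ) < (2:ℝ) ^ p - 1 := by
    have h1 : (1:ℝ) < (2:ℝ) ^ p := by
      calc (1:ℝ) = (2:ℝ) ^ (0:ℝ) := by rw [Real.rpow_zero]
        _ < (2:ℝ) ^ p := by
            rw [Real.rpow_lt_rpow_left_iff (by norm_num : (1:ℝ) < 2)]; exact hp
    linarith
  have h2p2 : (2:ℝ) ^ p ≤ 2 := by
    calc (2:ℝ) ^ p ≤ (2:ℝ) ^ (1:ℝ) := by
          rw [Real.rpow_le_rpow_left_iff (by norm_num : (1:ℝ) < 2)]; exact hp1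
      _ = 2 := Real.rpow_one 2
  have hinv : (1:ℝ) ≤ ((2:ℝ) ^ p - 1)⁻¹ := by
    have hmul : ((2:ℝ) ^ p - 1) * ((2:ℝ) ^ p - 1)⁻¹ = 1 := mul_inv_cancel₀ (ne_of_gt h2p1)
    nlinarith [inv_nonneg.2 h2p1.le]
  have hBP0 : (0:ℝ) ≤ BP := by
    rw [hBPdef]; split <;> positivity
  have hBpow : ∀ a : ℝ, 0 ≤ a →
      (a ^ (1/p) * ((2:ℝ) ^ p - 1) ^ (-(1/p))) ^ p = a * ((2:ℝ) ^ p - 1)⁻¹ := by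
    intro a ha
    rw [Real.mul_rpow (by positivity) (by positivity)]
    rw [← Real.rpow_mul ha, one_div_mul_cancel hp.ne', Real.rpow_one]
    rw [← Real.rpow_mul h2p1.le]
    rw [show -(1/p) * p = -1 by field_simp, Real.rpow_neg_one]
  have hBP2 : (2:ℝ) ≤ BP ^ p := by
    rw [hBPdef]
    split
    · rw [hBpow 2 (by norm_num)]; nlinarith
    · rw [hBpow 4 (by norm_num)]; nlinarith
  set c : ℝ := C ^ p with hcdef
  have hc0 : (0:ℝ) < c := Real.rpow_pos_of_pos hC p
  have hC3 : C ^ (3 * p) = c ^ (3:ℕ) := by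
    rw [show (3:ℝ) * p = p * 3 by ring, Real.rpow_mul hC.le,
      show ((3:ℝ)) = ((3:ℕ):ℝ) by norm_num, Real.rpow_natCast]
  have ht2pos : (0:ℝ) < (2:ℝ) ^ (1 - p) := Real.rpow_pos_of_pos (by norm_num) _
  have hhalfp2 : ((1/2:ℝ)) ^ p * 2 = (2:ℝ) ^ (1 - p) := by
    have e1 : ((1/2:ℝ)) ^ p = ((2:ℝ) ^ p)⁻¹ := by
      rw [one_div, Real.inv_rpow (by norm_num : (0:ℝ) ≤ 2)]
    have e2 : (2:ℝ) ^ (1 - p) = 2 * ((2:ℝ) ^ p)⁻¹ := by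
      rw [show (1:ℝ) - p = 1 + -p by ring, Real.rpow_add (by norm_num : (0:ℝ) < 2),
        Real.rpow_one, Real.rpow_neg (by norm_num : (0:ℝ) ≤ 2)]
    rw [e1, e2]; ring
  have hroot : ∀ x : ℝ, 0 ≤ x → (x ^ p) ^ (1/p) = x := by
    intro x hx
    rw [← Real.rpow_mul hx, show p * (1/p) = 1 by field_simp, Real.rpow_one]
  set D : ℝ := C ^ p + (2:ℝ) ^ (1 - p) * BP ^ p * C ^ (3 * p) with hDdef
  have hRnn : (0:ℝ) ≤ (2:ℝ) ^ (1 - p) * BP ^ p * C ^ (3 * p) :=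
    mul_nonneg (mul_nonneg ht2pos.le (Real.rpow_nonneg hBP0 _)) (Real.rpow_nonneg hC.le _)
  have hD0 : (0:ℝ) ≤ D := by rw [hDdef]; positivity
  -- trivial case
  by_cases htriv : ∀ g : X, bs.N g = 0
  · rw [htriv (f - bs.proj A f), htriv f, mul_zero]
  push_neg at htriv
  obtain ⟨f₀, hf₀⟩ := htriv
  have hC1 : (1:ℝ) ≤ C := by
    have hgr : bs.IsGreedySet f₀ (∅ : Finset ℕ) := fun n hn => absurd hn (Finset.notMem_empty n)
    have h0 := h f₀ ∅ ∅ hgr rfl (Or.inl (fun a ha => absurd ha (Finset.notMem_empty a)))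
    simp only [PBasis.proj, Finset.sum_empty, sub_zero, PBasis.ind, smul_zero] at h0
    have hN0 : 0 < bs.N f₀ := lt_of_le_of_ne (bs.N_nonneg f₀) (Ne.symm hf₀)
    nlinarith
  have hc1 : (1:ℝ) ≤ c := by
    calc (1:ℝ) = (1:ℝ) ^ p := (Real.one_rpow p).symm
      _ ≤ C ^ p := Real.rpow_le_rpow (by norm_num) hC1 hp.le
  -- reduction to the power inequality
  suffices hfin : bs.N (f - bs.proj A f) ^ p ≤ D * bs.N f ^ p by
    have h1 : bs.N (f - bs.proj A f) = (bs.N (f - bs.proj A f) ^ p) ^ (1/p) :=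
      (hroot _ (bs.N_nonneg _)).symm
    have h2 : D * bs.N f ^ p = (D ^ (1/p) * bs.N f) ^ p := by
      rw [Real.mul_rpow (Real.rpow_nonneg hD0 _) (bs.N_nonneg f), ← Real.rpow_mul hD0,
        show (1/p) * p = 1 by field_simp, Real.rpow_one]
    calc bs.N (f - bs.proj A f) = (bs.N (f - bs.proj A f) ^ p) ^ (1/p) := h1
      _ ≤ ((D ^ (1/p) * bs.N f) ^ p) ^ (1/p) := by
          apply Real.rpow_le_rpow (Real.rpow_nonneg (bs.N_nonneg _) _) _ (by positivity)
          rw [← h2]; exact hfin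
      _ = D ^ (1/p) * bs.N f := hroot _ (mul_nonneg (Real.rpow_nonneg hD0 _) (bs.N_nonneg f))
  -- the minimal coefficient
  set α : ℝ := bs.minCoef f A with hαdef
  have hα0 : 0 ≤ α := by
    rcases A.eq_empty_or_nonempty with hemp | hAne
    · rw [hαdef, hemp, minCoef_empty]
    · exact le_minCoef bs hAne fun n _ => norm_nonneg _
  rcases hα0.lt_or_eq with hαpos | hαzero
  swap
  · -- case α = 0 : direct application of the hypothesis
    have hbefore : PBasis.FinsetBefore A (block (A.sup id + 1) A.card) := by
      intro a ha b hb
      have h1 : a ≤ A.sup id := Finset.le_sup (f := id) ha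
      have h2 : A.sup id + 1 ≤ b := (mem_block.1 hb).1
      omega
    have h0 := h f A (block (A.sup id + 1) A.card) hGreedy (block_card _ _) (Or.inl hbefore)
    rw [← hαdef, ← hαzero] at h0
    simp only [RCLike.ofReal_zero, zero_smul, sub_zero] at h0
    have hCD : C ^ p ≤ D := by rw [hDdef]; linarith [hRnn]
    calc bs.N (f - bs.proj A f) ^ p ≤ (C * bs.N f) ^ p :=
          Real.rpow_le_rpow (bs.N_nonneg _) h0 hp.le
      _ = C ^ p * bs.N f ^ p := Real.mul_rpow hC.le (bs.N_nonneg f)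
      _ ≤ D * bs.N f ^ p := mul_le_mul_of_nonneg_right hCD (Real.rpow_nonneg (bs.N_nonneg f) p)
  -- main case : 0 < α
  have hAne : A.Nonempty := by
    rcases A.eq_empty_or_nonempty with hemp | hAne
    · exfalso; rw [hαdef, hemp, minCoef_empty] at hαpos; exact lt_irrefl 0 hαpos
    · exact hAne
  have hm1 : 1 ≤ A.card := Finset.card_pos.2 hAne
  have hnormαc : ‖((α:ℝ) : 𝕜)‖ = α := by rw [RCLike.norm_ofReal, abs_of_nonneg hα0]
  have hcoordA : ∀ n ∈ A, α ≤ ‖bs.coord n f‖ := fun n hn => by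
    rw [hαdef]; exact minCoef_le bs hn
  have hcoordout : ∀ q, q ∉ A → ‖bs.coord q f‖ ≤ α := fun q hq => by
    rw [hαdef]; exact le_minCoef bs hAne fun n hn => hGreedy n hn q hq
  set m := A.card with hmdef
  -- main estimate, with error ε
  have hmain : ∀ ε : ℝ, 0 < ε → bs.N (f - bs.proj A f) ^ p ≤
      c * bs.N f ^ p + (2:ℝ) ^ (1 - p) * (c ^ (2:ℕ) + c) * bs.N f ^ p + ε := by
    intro ε hε
    set K : ℝ := c + 1 + (2:ℝ) ^ (1 - p) * (c + 1) ^ (2:ℕ) with hKdef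
    have hK0 : (0:ℝ) < K := by
      have : (0:ℝ) ≤ (2:ℝ) ^ (1 - p) * (c + 1) ^ (2:ℕ) := by positivity
      nlinarith
    set ε' : ℝ := ε / K with hε'def
    have hε'0 : (0:ℝ) < ε' := by positivity
    obtain ⟨M, hM⟩ := proj_block_small hp bs f m ε' hε'0
    set n₀ : ℕ := max M (A.sup id + 1) with hn₀def
    set G : Finset ℕ := block n₀ m with hGdef
    set H : Finset ℕ := block (n₀ + m) m with hHdef
    set E : Finset ℕ := block (n₀ + 2*m) m with hEdef
    have hGc : G.card = A.card := block_card _ _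
    have hHc : H.card = A.card := block_card _ _
    have hEc : E.card = A.card := block_card _ _
    have hAG : PBasis.FinsetBefore A G := by
      intro a ha b hb
      have h1 : a ≤ A.sup id := Finset.le_sup (f := id) ha
      have h2 := (mem_block.1 hb).1
      omega
    have hAH : PBasis.FinsetBefore A H := by
      intro a ha b hb
      have h1 : a ≤ A.sup id := Finset.le_sup (f := id) ha
      have h2 := (mem_block.1 hb).1
      omega
    have hAE : PBasis.FinsetBefore A E := by
      intro a ha b hb
      have h1 : a ≤ A.sup id := Finset.le_sup (f := id) ha
      have h2 := (mem_block.1 hb).1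
      omega
    have hHE : PBasis.FinsetBefore H E := by
      intro a ha b hb
      have h1 := (mem_block.1 ha).2
      have h2 := (mem_block.1 hb).1
      omega
    have hsG : bs.N (bs.proj G f) ^ p ≤ ε' :=
      hM G (fun b hb => le_trans (le_max_left _ _) (mem_block.1 hb).1) (block_card _ _).le
    have hsH : bs.N (bs.proj H f) ^ p ≤ ε' :=
      hM H (fun b hb => le_trans (le_max_left _ _) (le_trans (Nat.le_add_right _ _) (mem_block.1 hb).1)) (block_card _ _).le
    have hsE : bs.N (bs.proj E f) ^ p ≤ ε' :=
      hM E (fun b hb => le_trans (le_max_left _ _) (le_trans (Nat.le_add_right _ _) (mem_block.1 hb).1)) (block_card _ _).le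
    -- the key inequality (P1): for each far block B
    have P1 : ∀ B : Finset ℕ, B.card = A.card → PBasis.FinsetBefore A B →
        bs.N (bs.proj B f) ^ p ≤ ε' →
        bs.N (f - bs.proj A f - bs.proj B f + ((α:ℝ):𝕜) • bs.ind B) ^ p ≤
          c * (bs.N f ^ p + ε') := by
      intro B hBcard hABbef hBsmall
      have hAB : ∀ n ∈ A, n ∉ B := fun n hn hnB => absurd (hABbef n hn n hnB) (lt_irrefl n)
      set g : X := f - bs.proj B f + ((α:ℝ):𝕜) • bs.ind B with hgdef
      have hg_coord : ∀ n, bs.coord n g = if n ∈ B then ((α:ℝ):𝕜) else bs.coord n f := by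
        intro n
        rw [hgdef, map_add, map_sub, map_smul, coord_proj, coord_ind]
        by_cases hnB : n ∈ B <;> simp [hnB]
      have hgA : ∀ n ∈ A, bs.coord n g = bs.coord n f := fun n hn => by
        rw [hg_coord, if_neg (hAB n hn)]
      have hgreedyg : bs.IsGreedySet g A := by
        intro n hn q hq
        rw [hgA n hn]
        by_cases hqB : q ∈ B
        · rw [hg_coord, if_pos hqB, hnormαc]; exact hcoordA n hn
        · rw [hg_coord, if_neg hqB]; exact hGreedy n hn q hq
      have hgmin : bs.minCoef g A = bs.minCoef f A := minCoef_congr bs hgA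
      have h0 := h g A B hgreedyg hBcard (Or.inl hABbef)
      rw [hgmin, ← hαdef] at h0
      have hprojAg : bs.proj A g = bs.proj A f := proj_congr bs hgA
      rw [hprojAg] at h0
      have hid1 : g - bs.proj A f =
          f - bs.proj A f - bs.proj B f + ((α:ℝ):𝕜) • bs.ind B := by
        rw [hgdef]; abel
      have hid2 : g - ((α:ℝ):𝕜) • bs.ind B = f - bs.proj B f := by
        rw [hgdef]; abel
      rw [hid1, hid2] at h0
      have hNpow := Real.rpow_le_rpow (bs.N_nonneg _) h0 hp.le
      rw [Real.mul_rpow hC.le (bs.N_nonneg _)] at hNpow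
      have hsub : bs.N (f - bs.proj B f) ^ p ≤ bs.N f ^ p + ε' := by
        have := N_psub bs f (bs.proj B f)
        linarith
      calc bs.N (f - bs.proj A f - bs.proj B f + ((α:ℝ):𝕜) • bs.ind B) ^ p ≤
            C ^ p * bs.N (f - bs.proj B f) ^ p := hNpow
        _ ≤ c * (bs.N f ^ p + ε') := by
            rw [← hcdef]
            exact mul_le_mul_of_nonneg_left hsub hc0.le
    have hvG := P1 G hGc hAG hsG
    have hvH := P1 H hHc hAH hsH
    have hvE := P1 E hEc hAE hsE
    -- difference of two far indicator blocks
    have hwGH : bs.N (((α:ℝ):𝕜) • bs.ind G - ((α:ℝ):𝕜) • bs.ind H) ^ p ≤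
        2 * (c * (bs.N f ^ p + ε')) + 2 * ε' := by
      have hid : ((α:ℝ):𝕜) • bs.ind G - ((α:ℝ):𝕜) • bs.ind H =
          (((f - bs.proj A f - bs.proj G f + ((α:ℝ):𝕜) • bs.ind G) -
            (f - bs.proj A f - bs.proj H f + ((α:ℝ):𝕜) • bs.ind H)) + bs.proj G f) -
            bs.proj H f := by abel
      rw [hid]
      have t1 := N_psub bs (((f - bs.proj A f - bs.proj G f + ((α:ℝ):𝕜) • bs.ind G) -
            (f - bs.proj A f - bs.proj H f + ((α:ℝ):𝕜) • bs.ind H)) + bs.proj G f)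
            (bs.proj H f)
      have t2 := bs.N_padd ((f - bs.proj A f - bs.proj G f + ((α:ℝ):𝕜) • bs.ind G) -
            (f - bs.proj A f - bs.proj H f + ((α:ℝ):𝕜) • bs.ind H)) (bs.proj G f)
      have t3 := N_psub bs (f - bs.proj A f - bs.proj G f + ((α:ℝ):𝕜) • bs.ind G)
            (f - bs.proj A f - bs.proj H f + ((α:ℝ):𝕜) • bs.ind H)
      linarith
    have hwGE : bs.N (((α:ℝ):𝕜) • bs.ind G - ((α:ℝ):𝕜) • bs.ind E) ^ p ≤
        2 * (c * (bs.N f ^ p + ε')) + 2 * ε' := by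
      have hid : ((α:ℝ):𝕜) • bs.ind G - ((α:ℝ):𝕜) • bs.ind E =
          (((f - bs.proj A f - bs.proj G f + ((α:ℝ):𝕜) • bs.ind G) -
            (f - bs.proj A f - bs.proj E f + ((α:ℝ):𝕜) • bs.ind E)) + bs.proj G f) -
            bs.proj E f := by abel
      rw [hid]
      have t1 := N_psub bs (((f - bs.proj A f - bs.proj G f + ((α:ℝ):𝕜) • bs.ind G) -
            (f - bs.proj A f - bs.proj E f + ((α:ℝ):𝕜) • bs.ind E)) + bs.proj G f)
            (bs.proj E f)
      have t2 := bs.N_padd ((f - bs.proj A f - bs.proj G f + ((α:ℝ):𝕜) • bs.ind G) -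
            (f - bs.proj A f - bs.proj E f + ((α:ℝ):𝕜) • bs.ind E)) (bs.proj G f)
      have t3 := N_psub bs (f - bs.proj A f - bs.proj G f + ((α:ℝ):𝕜) • bs.ind G)
            (f - bs.proj A f - bs.proj E f + ((α:ℝ):𝕜) • bs.ind E)
      linarith
    -- the pure block function φ and the hypothesis applied to it
    set φ : X := ((α:ℝ):𝕜) • bs.ind G - ((α:ℝ):𝕜) • bs.ind H + ((α:ℝ):𝕜) • bs.ind E
      with hφdef
    have hGnH : ∀ n ∈ G, n ∉ H := fun n hn hn' => by
      have u1 := (mem_block.1 hn).2; have u2 := (mem_block.1 hn').1; omega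
    have hGnE : ∀ n ∈ G, n ∉ E := fun n hn hn' => by
      have u1 := (mem_block.1 hn).2; have u2 := (mem_block.1 hn').1; omega
    have hHnG : ∀ n ∈ H, n ∉ G := fun n hn hn' => by
      have u1 := (mem_block.1 hn).1; have u2 := (mem_block.1 hn').2; omega
    have hHnE : ∀ n ∈ H, n ∉ E := fun n hn hn' => by
      have u1 := (mem_block.1 hn).2; have u2 := (mem_block.1 hn').1; omega
    have hEnG : ∀ n ∈ E, n ∉ G := fun n hn hn' => by
      have u1 := (mem_block.1 hn).1; have u2 := (mem_block.1 hn').2; omega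
    have hEnH : ∀ n ∈ E, n ∉ H := fun n hn hn' => by
      have u1 := (mem_block.1 hn).1; have u2 := (mem_block.1 hn').2; omega
    have hφcoordG : ∀ n ∈ G, bs.coord n φ = ((α:ℝ):𝕜) := by
      intro n hn
      rw [hφdef, map_add, map_sub, map_smul, map_smul, map_smul, coord_ind, coord_ind,
        coord_ind, if_pos hn, if_neg (hGnH n hn), if_neg (hGnE n hn)]
      simp
    have hφcoordH : ∀ n ∈ H, bs.coord n φ = -((α:ℝ):𝕜) := by
      intro n hn
      rw [hφdef, map_add, map_sub, map_smul, map_smul, map_smul, coord_ind, coord_ind,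
        coord_ind, if_pos hn, if_neg (hHnG n hn), if_neg (hHnE n hn)]
      simp
    have hφcoordE : ∀ n ∈ E, bs.coord n φ = ((α:ℝ):𝕜) := by
      intro n hn
      rw [hφdef, map_add, map_sub, map_smul, map_smul, map_smul, coord_ind, coord_ind,
        coord_ind, if_pos hn, if_neg (hEnG n hn), if_neg (hEnH n hn)]
      simp
    have hφcoord0 : ∀ n, n ∉ G → n ∉ H → n ∉ E → bs.coord n φ = 0 := by
      intro n h1 h2 h3
      rw [hφdef, map_add, map_sub, map_smul, map_smul, map_smul, coord_ind, coord_ind,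
        coord_ind, if_neg h1, if_neg h2, if_neg h3]
      simp
    have hφgreedy : bs.IsGreedySet φ H := by
      intro n hn q hq
      rw [hφcoordH n hn, norm_neg, hnormαc]
      by_cases hqG : q ∈ G
      · rw [hφcoordG q hqG, hnormαc]
      · by_cases hqE : q ∈ E
        · rw [hφcoordE q hqE, hnormαc]
        · rw [hφcoord0 q hqG hq hqE, norm_zero]; exact hα0
    have hHne : n₀ + m ∈ H := mem_block.2 ⟨le_refl _, by omega⟩
    have hφmin : bs.minCoef φ H = α := by
      apply le_antisymm
      · calc bs.minCoef φ H ≤ ‖bs.coord (n₀ + m) φ‖ := minCoef_le bs hHne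
          _ = α := by rw [hφcoordH _ hHne, norm_neg, hnormαc]
      · apply le_minCoef bs ⟨n₀ + m, hHne⟩
        intro n hn
        rw [hφcoordH n hn, norm_neg, hnormαc]
    have hprojHφ : bs.proj H φ = -(((α:ℝ):𝕜) • bs.ind H) := by
      have hcg : ∀ n ∈ H, bs.coord n φ • bs.e n = -(((α:ℝ):𝕜) • bs.e n) := fun n hn => by
        rw [hφcoordH n hn, neg_smul]
      calc bs.proj H φ = ∑ n ∈ H, bs.coord n φ • bs.e n := rfl
        _ = ∑ n ∈ H, -(((α:ℝ):𝕜) • bs.e n) := Finset.sum_congr rfl hcg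
        _ = -(((α:ℝ):𝕜) • bs.ind H) := by
            rw [PBasis.ind, Finset.smul_sum, ← Finset.sum_neg_distrib]
    have h0φ := h φ H E hφgreedy (hEc.trans hHc.symm) (Or.inl hHE)
    rw [hφmin] at h0φ
    have hid3 : φ - bs.proj H φ = ((α:ℝ):𝕜) • bs.ind G + ((α:ℝ):𝕜) • bs.ind E := by
      rw [hprojHφ, hφdef]; abel
    have hid4 : φ - ((α:ℝ):𝕜) • bs.ind E =
        ((α:ℝ):𝕜) • bs.ind G - ((α:ℝ):𝕜) • bs.ind H := by
      rw [hφdef]; abel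
    rw [hid3, hid4] at h0φ
    have hS1 : bs.N (((α:ℝ):𝕜) • bs.ind G + ((α:ℝ):𝕜) • bs.ind E) ^ p ≤
        c * bs.N (((α:ℝ):𝕜) • bs.ind G - ((α:ℝ):𝕜) • bs.ind H) ^ p := by
      have hpow := Real.rpow_le_rpow (bs.N_nonneg _) h0φ hp.le
      rw [Real.mul_rpow hC.le (bs.N_nonneg _), ← hcdef] at hpow
      exact hpow
    -- halving trick
    have hhalfnorm : ‖(((1/2:ℝ)) : 𝕜)‖ = 1/2 := by
      rw [RCLike.norm_ofReal]; norm_num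
    have hidhalf : ((α:ℝ):𝕜) • bs.ind G =
        (((1/2:ℝ)):𝕜) • (((α:ℝ):𝕜) • bs.ind G + ((α:ℝ):𝕜) • bs.ind E) +
        (((1/2:ℝ)):𝕜) • (((α:ℝ):𝕜) • bs.ind G - ((α:ℝ):𝕜) • bs.ind E) := by
      have hsum2 : (((1/2:ℝ)):𝕜) + (((1/2:ℝ)):𝕜) = 1 := by
        rw [← RCLike.ofReal_add]; norm_num
      have key : (((1/2:ℝ)):𝕜) • (((α:ℝ):𝕜) • bs.ind G + ((α:ℝ):𝕜) • bs.ind E) +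
          (((1/2:ℝ)):𝕜) • (((α:ℝ):𝕜) • bs.ind G - ((α:ℝ):𝕜) • bs.ind E) =
          ((((1/2:ℝ)):𝕜) + (((1/2:ℝ)):𝕜)) • (((α:ℝ):𝕜) • bs.ind G) := by
        rw [smul_add, smul_sub, add_smul]; abel
      rw [key, hsum2, one_smul]
    have hT : bs.N (((α:ℝ):𝕜) • bs.ind G) ^ p ≤
        ((1/2:ℝ)) ^ p * (bs.N (((α:ℝ):𝕜) • bs.ind G + ((α:ℝ):𝕜) • bs.ind E) ^ p +
          bs.N (((α:ℝ):𝕜) • bs.ind G - ((α:ℝ):𝕜) • bs.ind E) ^ p) := by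
      calc bs.N (((α:ℝ):𝕜) • bs.ind G) ^ p
          = bs.N ((((1/2:ℝ)):𝕜) • (((α:ℝ):𝕜) • bs.ind G + ((α:ℝ):𝕜) • bs.ind E) +
              (((1/2:ℝ)):𝕜) • (((α:ℝ):𝕜) • bs.ind G - ((α:ℝ):𝕜) • bs.ind E)) ^ p := by
            rw [← hidhalf]
        _ ≤ bs.N ((((1/2:ℝ)):𝕜) • (((α:ℝ):𝕜) • bs.ind G + ((α:ℝ):𝕜) • bs.ind E)) ^ p +
            bs.N ((((1/2:ℝ)):𝕜) • (((α:ℝ):𝕜) • bs.ind G - ((α:ℝ):𝕜) • bs.ind E)) ^ p :=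
            bs.N_padd _ _
        _ = (1/2 * bs.N (((α:ℝ):𝕜) • bs.ind G + ((α:ℝ):𝕜) • bs.ind E)) ^ p +
            (1/2 * bs.N (((α:ℝ):𝕜) • bs.ind G - ((α:ℝ):𝕜) • bs.ind E)) ^ p := by
            rw [bs.N_smul, bs.N_smul, hhalfnorm]
        _ = ((1/2:ℝ)) ^ p * bs.N (((α:ℝ):𝕜) • bs.ind G + ((α:ℝ):𝕜) • bs.ind E) ^ p +
            ((1/2:ℝ)) ^ p * bs.N (((α:ℝ):𝕜) • bs.ind G - ((α:ℝ):𝕜) • bs.ind E) ^ p := by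
            rw [Real.mul_rpow (by norm_num) (bs.N_nonneg _),
              Real.mul_rpow (by norm_num) (bs.N_nonneg _)]
        _ = _ := by ring
    -- split of the error term
    have hx : bs.N (f - bs.proj A f) ^ p ≤
        bs.N (f - bs.proj A f - bs.proj G f + ((α:ℝ):𝕜) • bs.ind G) ^ p +
        (bs.N (bs.proj G f) ^ p + bs.N (((α:ℝ):𝕜) • bs.ind G) ^ p) := by
      have hid5 : f - bs.proj A f =
          (f - bs.proj A f - bs.proj G f + ((α:ℝ):𝕜) • bs.ind G) +
          (bs.proj G f - ((α:ℝ):𝕜) • bs.ind G) := by abel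
      have t1 := bs.N_padd (f - bs.proj A f - bs.proj G f + ((α:ℝ):𝕜) • bs.ind G)
        (bs.proj G f - ((α:ℝ):𝕜) • bs.ind G)
      rw [← hid5] at t1
      have t2 := N_psub bs (bs.proj G f) (((α:ℝ):𝕜) • bs.ind G)
      linarith
    -- numerical assembly
    have hhp : (0:ℝ) < ((1/2:ℝ)) ^ p := Real.rpow_pos_of_pos (by norm_num) _
    have hS1' : bs.N (((α:ℝ):𝕜) • bs.ind G + ((α:ℝ):𝕜) • bs.ind E) ^ p ≤
        c * (2 * (c * (bs.N f ^ p + ε')) + 2 * ε') :=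
      le_trans hS1 (mul_le_mul_of_nonneg_left hwGH hc0.le)
    have hT' : bs.N (((α:ℝ):𝕜) • bs.ind G) ^ p ≤
        ((1/2:ℝ)) ^ p * (c * (2 * (c * (bs.N f ^ p + ε')) + 2 * ε') +
          (2 * (c * (bs.N f ^ p + ε')) + 2 * ε')) :=
      le_trans hT (mul_le_mul_of_nonneg_left (add_le_add hS1' hwGE) hhp.le)
    have hT'' : ((1/2:ℝ)) ^ p * (c * (2 * (c * (bs.N f ^ p + ε')) + 2 * ε') +
          (2 * (c * (bs.N f ^ p + ε')) + 2 * ε')) =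
        (2:ℝ) ^ (1 - p) * (c + 1) * (c * (bs.N f ^ p + ε') + ε') := by
      rw [← hhalfp2]; ring
    have hKe : K * ε' = ε := by
      rw [hε'def]; field_simp
    have hexp : c * (bs.N f ^ p + ε') + ε' +
        (2:ℝ) ^ (1 - p) * (c + 1) * (c * (bs.N f ^ p + ε') + ε') =
        c * bs.N f ^ p + (2:ℝ) ^ (1 - p) * (c ^ (2:ℕ) + c) * bs.N f ^ p + K * ε' := by
      rw [hKdef]; ring
    rw [← hKe]
    rw [← hexp]
    rw [hT''] at hT'
    linarith
  -- pass to the limit ε → 0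
  have hfinal : bs.N (f - bs.proj A f) ^ p ≤
      c * bs.N f ^ p + (2:ℝ) ^ (1 - p) * (c ^ (2:ℕ) + c) * bs.N f ^ p := by
    refine le_of_forall_sub_le fun ε hε => ?_
    linarith [hmain ε hε]
  have hDc : D = c + (2:ℝ) ^ (1 - p) * BP ^ p * c ^ (3:ℕ) := by
    rw [hDdef, hC3, ← hcdef]
  have hFnn : (0:ℝ) ≤ bs.N f ^ p := Real.rpow_nonneg (bs.N_nonneg f) p
  have hcoef : c ^ (2:ℕ) + c ≤ BP ^ p * c ^ (3:ℕ) := by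
    have e1 : c ^ (2:ℕ) ≤ c ^ (3:ℕ) := by nlinarith [hc1, hc0]
    have e2 : c ≤ c ^ (3:ℕ) := by nlinarith [hc1, hc0]
    have e3 : 2 * c ^ (3:ℕ) ≤ BP ^ p * c ^ (3:ℕ) :=
      mul_le_mul_of_nonneg_right hBP2 (pow_nonneg hc0.le 3)
    linarith
  calc bs.N (f - bs.proj A f) ^ p ≤
      c * bs.N f ^ p + (2:ℝ) ^ (1 - p) * (c ^ (2:ℕ) + c) * bs.N f ^ p := hfinal
    _ ≤ c * bs.N f ^ p + (2:ℝ) ^ (1 - p) * (BP ^ p * c ^ (3:ℕ)) * bs.N f ^ p := by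
        have := mul_le_mul_of_nonneg_left hcoef ht2pos.le
        nlinarith [hFnn]
    _ = D * bs.N f ^ p := by rw [hDc]; ring
end
end
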